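/- Let A be a left brace and let I, J be left nilpotent ideals of A. Then I + J = {a+b : a ∈ I, b ∈ J} is a left nilpotent ideal of A. -/
import Mathlib


/-- A left brace: `(A,+)` abelian group, `(A,∘)` a group, with
`a ∘ (b + c) + a = a ∘ b + a ∘ c`. -/
structure LeftBrace (A : Type) [AddCommGroup A] where
  circ : A → A → A
  one : A
  inv : A → A
  circ_assoc : ∀ a b c, circ (circ a b) c = circ a (circ b c)
  one_circ : ∀ a, circ one a = a
  circ_one : ∀ a, circ a one = a
  inv_circ : ∀ a, circ (inv a) a = one
  circ_add : ∀ a b c, circ a (b + c) + a = circ a b + circ a c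

namespace LeftBrace

variable {A : Type} [AddCommGroup A]

/-- `a * b = a ∘ b - a - b`. -/
def star (B : LeftBrace A) (a b : A) : A := B.circ a b - a - b

/-- `lchain B n = Aⁿ` for `n ≥ 1` (and `lchain B 0 = ⊤`): `A¹ = A`, and
`Aⁿ⁺¹` is the additive subgroup generated by `{a * b : a ∈ A, b ∈ Aⁿ}`. -/
def lchain (B : LeftBrace A) : ℕ → AddSubgroup A
  | 0 => ⊤
  | 1 => ⊤
  | n + 2 => AddSubgroup.closure {x | ∃ a : A, ∃ b ∈ B.lchain (n + 1), x = B.star a b}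

/-- `rchain B n = A⁽ⁿ⁾` for `n ≥ 1`: `A⁽¹⁾ = A`, and `A⁽ⁿ⁺¹⁾` is the additive
subgroup generated by `{a * b : a ∈ A⁽ⁿ⁾, b ∈ A}`. -/
def rchain (B : LeftBrace A) : ℕ → AddSubgroup A
  | 0 => ⊤
  | 1 => ⊤
  | n + 2 => AddSubgroup.closure {x | ∃ a ∈ B.rchain (n + 1), ∃ b : A, x = B.star a b}

/-- `schain B n = A^[n]` for `n ≥ 1`:  `A^[1] = A`, and
`A^[i+1] = Σ_{j=1}^{i} A^[j] * A^[i+1-j]` (additive subgroup generated by the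
corresponding products). -/
def schain (B : LeftBrace A) : ℕ → AddSubgroup A
  | 0 => ⊤
  | 1 => ⊤
  | n + 2 => AddSubgroup.closure
      {x | ∃ j : Fin (n + 1), ∃ u ∈ B.schain (j.1 + 1), ∃ v ∈ B.schain (n + 1 - j.1),
        x = B.star u v}

/-- An ideal of a left brace: an additive subgroup, normal in `(A,∘)`, and
invariant under all maps `λ_a(x) = a * x + x`. -/
structure IsIdeal (B : LeftBrace A) (I : AddSubgroup A) : Prop where
  lam_mem : ∀ a : A, ∀ x ∈ I, B.star a x + x ∈ I
  conj_mem : ∀ a : A, ∀ x ∈ I, B.circ (B.circ a x) (B.inv a) ∈ I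

/-- Left chain of an ideal: `ichainL B I n = Iⁿ⁺¹`, where `I¹ = I` and `Iⁱ⁺¹`
is the additive subgroup generated by `{a * b : a ∈ I, b ∈ Iⁱ}`. -/
def ichainL (B : LeftBrace A) (I : AddSubgroup A) : ℕ → AddSubgroup A
  | 0 => I
  | n + 1 => AddSubgroup.closure {x | ∃ a ∈ I, ∃ b ∈ B.ichainL I n, x = B.star a b}

/-- Right chain of an ideal: `ichainR B I n = I⁽ⁿ⁺¹⁾`, where `I⁽¹⁾ = I` and
`I⁽ⁱ⁺¹⁾` is the additive subgroup generated by `{a * b : a ∈ I⁽ⁱ⁾, b ∈ I}`. -/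
def ichainR (B : LeftBrace A) (I : AddSubgroup A) : ℕ → AddSubgroup A
  | 0 => I
  | n + 1 => AddSubgroup.closure {x | ∃ a ∈ B.ichainR I n, ∃ b ∈ I, x = B.star a b}

end LeftBrace
namespace LeftBrace

variable {A : Type} [AddCommGroup A] (B : LeftBrace A)

lemma circ_zero (a : A) : B.circ a 0 = a := by
  have h := B.circ_add a 0 0
  rw [add_zero] at h
  exact (add_left_cancel h).symm

lemma one_eq_zero : B.one = 0 := by
  rw [← B.one_circ 0, B.circ_zero]

lemma zero_circ (a : A) : B.circ 0 a = a := by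
  rw [← B.one_eq_zero, B.one_circ]

lemma circ_inv (a : A) : B.circ a (B.inv a) = 0 := by
  calc B.circ a (B.inv a)
      = B.circ B.one (B.circ a (B.inv a)) := (B.one_circ _).symm
    _ = B.circ (B.circ (B.inv (B.inv a)) (B.inv a)) (B.circ a (B.inv a)) := by
        rw [B.inv_circ]
    _ = B.circ (B.inv (B.inv a)) (B.circ (B.circ (B.inv a) a) (B.inv a)) := by
        rw [B.circ_assoc, B.circ_assoc]
    _ = 0 := by rw [B.inv_circ, B.one_circ, B.inv_circ, B.one_eq_zero]

lemma inv_inv' (a : A) : B.inv (B.inv a) = a := by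
  calc B.inv (B.inv a) = B.circ (B.inv (B.inv a)) B.one := (B.circ_one _).symm
    _ = B.circ (B.inv (B.inv a)) (B.circ (B.inv a) a) := by rw [B.inv_circ]
    _ = a := by rw [← B.circ_assoc, B.inv_circ, B.one_circ]

/-- The lambda map `λ_a(b) = a ∘ b - a`, as an additive homomorphism. -/
def lamH (a : A) : A →+ A :=
  AddMonoidHom.mk' (fun b => B.circ a b - a) (by
    intro b c
    have h := B.circ_add a b c
    show B.circ a (b + c) - a = (B.circ a b - a) + (B.circ a c - a)
    have h2 : B.circ a (b + c) = B.circ a b + B.circ a c - a := by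
      rw [← h]; abel
    rw [h2]; abel)

@[simp] lemma lamH_apply (a b : A) : B.lamH a b = B.circ a b - a := rfl

lemma star_eq (a b : A) : B.star a b = B.lamH a b - b := rfl

/-- star with fixed left argument, as an additive homomorphism. -/
def starH (a : A) : A →+ A := B.lamH a - AddMonoidHom.id A

@[simp] lemma starH_apply (a b : A) : B.starH a b = B.star a b := rfl

lemma star_zero (a : A) : B.star a 0 = 0 := by
  simp [star, B.circ_zero]

lemma lam_circ (a b c : A) : B.lamH (B.circ a b) c = B.lamH a (B.lamH b c) := by
  rw [show B.lamH b c = B.circ b c - b from rfl, map_sub]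
  simp only [lamH_apply]
  rw [← B.circ_assoc]
  abel

lemma lam_zero_apply (b : A) : B.lamH 0 b = b := by
  simp [B.zero_circ]

lemma lam_inv_lam (a b : A) : B.lamH a (B.lamH (B.inv a) b) = b := by
  rw [← B.lam_circ, B.circ_inv, B.lam_zero_apply]

lemma lam_inv_self (a : A) : B.lamH a (B.inv a) = -a := by
  simp [B.circ_inv]

lemma circ_eq_add_lam (a b : A) : B.circ a b = a + B.lamH a b := by
  simp

/-- `(x+y)*c = x*c + λ_x((λ_{x⁻¹}y)*c)`. -/
lemma star_add_left (x y c : A) :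
    B.star (x + y) c = B.star x c + B.lamH x (B.star (B.lamH (B.inv x) y) c) := by
  set w := B.lamH (B.inv x) y with hw
  have hxy : x + y = B.circ x w := by
    rw [B.circ_eq_add_lam, B.lam_inv_lam]
  rw [hxy, B.star_eq, B.lam_circ, B.star_eq, B.star_eq, map_sub]
  abel

/-- conjugation formula: `a∘z∘a⁻¹ = λ_a z + λ_a (z * a⁻¹)`. -/
lemma conj_eq (a z : A) :
    B.circ (B.circ a z) (B.inv a) = B.lamH a z + B.lamH a (B.star z (B.inv a)) := by
  rw [B.circ_assoc, B.circ_eq_add_lam z (B.inv a), B.circ_eq_add_lam a _, map_add,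
    B.star_eq, map_sub, B.lam_inv_self]
  abel

/-- `λ_a (x*b) = (a∘x∘a⁻¹) * (λ_a b)`. -/
lemma lam_star (a x b : A) :
    B.lamH a (B.star x b) =
      B.star (B.circ (B.circ a x) (B.inv a)) (B.lamH a b) := by
  rw [B.star_eq, map_sub, B.star_eq, ← B.lam_circ, ← B.lam_circ]
  have : B.circ (B.circ (B.circ a x) (B.inv a)) a = B.circ a x := by
    rw [B.circ_assoc, B.inv_circ, B.circ_one]
  rw [this]

section Ideal

variable {B} {I J : AddSubgroup A}

lemma lam_mem_ideal (hI : B.IsIdeal I) (a : A) {x : A} (hx : x ∈ I) :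
    B.lamH a x ∈ I := by
  have h := hI.lam_mem a x hx
  have e : B.star a x + x = B.lamH a x := by
    rw [B.star_eq]; abel
  rwa [e] at h

lemma star_mem_ideal_right (hI : B.IsIdeal I) (a : A) {x : A} (hx : x ∈ I) :
    B.star a x ∈ I := by
  rw [B.star_eq]
  exact sub_mem (lam_mem_ideal hI a hx) hx

lemma star_mem_ideal_left (hI : B.IsIdeal I) {x : A} (hx : x ∈ I) (a : A) :
    B.star x a ∈ I := by
  set y := B.circ (B.circ (B.inv a) x) a with hy
  have hyI : y ∈ I := by
    have := hI.conj_mem (B.inv a) x hx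
    rwa [B.inv_inv'] at this
  have key : B.circ x a = B.circ a y := by
    rw [hy, ← B.circ_assoc, ← B.circ_assoc, B.circ_inv, B.zero_circ]
  have e : B.star x a = B.lamH a y - x := by
    show B.circ x a - x - a = B.circ a y - a - x
    rw [key]; abel
  rw [e]
  exact sub_mem (lam_mem_ideal hI a hyI) hx


lemma lam_ichainL (hI : B.IsIdeal I) (n : ℕ) (a : A) {x : A}
    (hx : x ∈ B.ichainL I n) : B.lamH a x ∈ B.ichainL I n := by
  induction n generalizing a x with
  | zero => exact lam_mem_ideal hI a hx
  | succ n ih =>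
    have hle : B.ichainL I (n+1) ≤ AddSubgroup.comap (B.lamH a) (B.ichainL I (n+1)) := by
      show AddSubgroup.closure _ ≤ _
      rw [AddSubgroup.closure_le]
      rintro s ⟨u, hu, b, hb, rfl⟩
      show B.lamH a (B.star u b) ∈ B.ichainL I (n+1)
      rw [B.lam_star]
      exact AddSubgroup.subset_closure ⟨_, hI.conj_mem a u hu, _, ih a hb, rfl⟩
    exact hle hx

lemma star_ichainL (hI : B.IsIdeal I) (n : ℕ) (a : A) {x : A}
    (hx : x ∈ B.ichainL I n) : B.star a x ∈ B.ichainL I n := by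
  rw [B.star_eq]
  exact sub_mem (lam_ichainL hI n a hx) hx

lemma ichainL_bot_succ {n : ℕ} (h : B.ichainL I n = ⊥) : B.ichainL I (n+1) = ⊥ := by
  rw [eq_bot_iff]
  show AddSubgroup.closure _ ≤ ⊥
  rw [AddSubgroup.closure_le]
  rintro s ⟨u, hu, b, hb, rfl⟩
  rw [h, AddSubgroup.mem_bot] at hb
  subst hb
  simp [B.star_zero]

lemma ichainL_bot_mono {m : ℕ} (h : B.ichainL I m = ⊥) {k : ℕ} (hk : m ≤ k) :
    B.ichainL I k = ⊥ := by
  induction k, hk using Nat.le_induction with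
  | base => exact h
  | succ k hk ih => exact ichainL_bot_succ ih

end Ideal

/-- `pchain B I i = I^i` with `I^0 = ⊤`. -/
def pchain (B : LeftBrace A) (I : AddSubgroup A) : ℕ → AddSubgroup A
  | 0 => ⊤
  | n + 1 => B.ichainL I n

/-- `mix B I J m = Σ_{i+j=m} I^i ⊓ J^j`. -/
def mix (B : LeftBrace A) (I J : AddSubgroup A) (m : ℕ) : AddSubgroup A :=
  (Finset.range (m+1)).sup fun i => B.pchain I i ⊓ B.pchain J (m - i)

section Ideal2

variable {B} {I J : AddSubgroup A}

lemma lam_pchain (hI : B.IsIdeal I) (i : ℕ) (a : A) {x : A}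
    (hx : x ∈ B.pchain I i) : B.lamH a x ∈ B.pchain I i := by
  cases i with
  | zero => trivial
  | succ i => exact lam_ichainL hI i a hx

lemma star_pchain_keep (hI : B.IsIdeal I) (i : ℕ) (a : A) {x : A}
    (hx : x ∈ B.pchain I i) : B.star a x ∈ B.pchain I i := by
  cases i with
  | zero => trivial
  | succ i => exact star_ichainL hI i a hx

lemma star_pchain_succ (hI : B.IsIdeal I) {x : A} (hx : x ∈ I) (i : ℕ) {b : A}
    (hb : b ∈ B.pchain I i) : B.star x b ∈ B.pchain I (i+1) := by
  cases i with
  | zero => exact star_mem_ideal_left hI hx b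
  | succ i => exact AddSubgroup.subset_closure ⟨x, hx, b, hb, rfl⟩

lemma map_mix_le {φ : A →+ A} {m : ℕ} {T : AddSubgroup A}
    (h : ∀ i, i ≤ m → ∀ x, x ∈ B.pchain I i ⊓ B.pchain J (m - i) → φ x ∈ T)
    {b : A} (hb : b ∈ B.mix I J m) : φ b ∈ T := by
  have hle : B.mix I J m ≤ AddSubgroup.comap φ T := by
    refine Finset.sup_le fun i hi => ?_
    intro y hy
    exact AddSubgroup.mem_comap.mpr
      (h i (Nat.lt_succ_iff.mp (Finset.mem_range.mp hi)) y hy)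
  exact hle hb

lemma mem_mix {m i : ℕ} (hi : i ≤ m) {x : A}
    (h1 : x ∈ B.pchain I i) (h2 : x ∈ B.pchain J (m - i)) : x ∈ B.mix I J m := by
  have := Finset.le_sup (f := fun i => B.pchain I i ⊓ B.pchain J (m - i))
    (Finset.mem_range.mpr (Nat.lt_succ_of_le hi))
  exact this (AddSubgroup.mem_inf.mpr ⟨h1, h2⟩)

lemma mix_star_left (hI : B.IsIdeal I) (hJ : B.IsIdeal J) {x : A} (hx : x ∈ I)
    {m : ℕ} {b : A} (hb : b ∈ B.mix I J m) : B.star x b ∈ B.mix I J (m+1) := by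
  have := map_mix_le (φ := B.starH x) (T := B.mix I J (m+1)) (fun i hi c hc => ?_) hb
  · simpa using this
  · rw [starH_apply]
    rw [AddSubgroup.mem_inf] at hc
    refine mem_mix (i := i+1) (by omega) (star_pchain_succ hI hx i hc.1) ?_
    rw [Nat.succ_sub_succ]
    exact star_pchain_keep hJ _ x hc.2

lemma mix_star_right (hI : B.IsIdeal I) (hJ : B.IsIdeal J) {y : A} (hy : y ∈ J)
    {m : ℕ} {b : A} (hb : b ∈ B.mix I J m) : B.star y b ∈ B.mix I J (m+1) := by
  have := map_mix_le (φ := B.starH y) (T := B.mix I J (m+1)) (fun i hi c hc => ?_) hb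
  · simpa using this
  · rw [starH_apply]
    rw [AddSubgroup.mem_inf] at hc
    refine mem_mix (i := i) (by omega) (star_pchain_keep hI _ y hc.1) ?_
    have h2 : m + 1 - i = (m - i) + 1 := by omega
    rw [h2]
    exact star_pchain_succ hJ hy _ hc.2

lemma mix_lam (hI : B.IsIdeal I) (hJ : B.IsIdeal J) (a : A)
    {m : ℕ} {b : A} (hb : b ∈ B.mix I J m) : B.lamH a b ∈ B.mix I J m := by
  refine map_mix_le (φ := B.lamH a) (T := B.mix I J m) (fun i hi c hc => ?_) hb
  rw [AddSubgroup.mem_inf] at hc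
  exact mem_mix hi (lam_pchain hI i a hc.1) (lam_pchain hJ _ a hc.2)

lemma lam_mem_sup (hI : B.IsIdeal I) (hJ : B.IsIdeal J) (a : A) {z : A}
    (hz : z ∈ I ⊔ J) : B.lamH a z ∈ I ⊔ J := by
  obtain ⟨x, hx, y, hy, rfl⟩ := AddSubgroup.mem_sup.mp hz
  rw [map_add]
  exact add_mem (AddSubgroup.mem_sup_left (lam_mem_ideal hI a hx))
    (AddSubgroup.mem_sup_right (lam_mem_ideal hJ a hy))

lemma star_mem_sup_left (hI : B.IsIdeal I) (hJ : B.IsIdeal J) {z : A}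
    (hz : z ∈ I ⊔ J) (c : A) : B.star z c ∈ I ⊔ J := by
  obtain ⟨x, hx, y, hy, rfl⟩ := AddSubgroup.mem_sup.mp hz
  rw [B.star_add_left]
  exact add_mem (AddSubgroup.mem_sup_left (star_mem_ideal_left hI hx c))
    (AddSubgroup.mem_sup_right (lam_mem_ideal hJ x
      (star_mem_ideal_left hJ (lam_mem_ideal hJ (B.inv x) hy) c)))

lemma chain_le_mix (hI : B.IsIdeal I) (hJ : B.IsIdeal J) (n : ℕ) :
    B.ichainL (I ⊔ J) n ≤ B.mix I J (n+1) := by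
  induction n with
  | zero =>
    show I ⊔ J ≤ B.mix I J 1
    apply sup_le
    · intro x hx
      exact mem_mix (m := 1) (i := 1) le_rfl hx trivial
    · intro y hy
      exact mem_mix (m := 1) (i := 0) (by omega) trivial hy
  | succ n ih =>
    show AddSubgroup.closure _ ≤ _
    rw [AddSubgroup.closure_le]
    rintro s ⟨a, ha, b, hb, rfl⟩
    obtain ⟨x, hx, y, hy, rfl⟩ := AddSubgroup.mem_sup.mp ha
    have hb' : b ∈ B.mix I J (n+1) := ih hb
    show B.star (x + y) b ∈ B.mix I J (n+2)
    rw [B.star_add_left]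
    exact add_mem (mix_star_left hI hJ hx hb')
      (mix_lam hI hJ x (mix_star_right hI hJ (lam_mem_ideal hJ (B.inv x) hy) hb'))

end Ideal2


end LeftBrace

/-- the sum of two left nilpotent ideals of a left brace is a
left nilpotent ideal. -/
theorem sum_leftNilpotent_ideals_leftNilpotent {A : Type} [AddCommGroup A]
    (B : LeftBrace A) (I J : AddSubgroup A)
    (hI : B.IsIdeal I) (hJ : B.IsIdeal J)
    (hIn : ∃ n : ℕ, B.ichainL I n = ⊥) (hJn : ∃ n : ℕ, B.ichainL J n = ⊥) :
    B.IsIdeal (I ⊔ J) ∧ ∃ n : ℕ, B.ichainL (I ⊔ J) n = ⊥ := by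
  constructor
  · constructor
    · intro a z hz
      have e : B.star a z + z = B.lamH a z := by rw [B.star_eq]; abel
      rw [e]
      exact LeftBrace.lam_mem_sup hI hJ a hz
    · intro a z hz
      rw [B.conj_eq]
      exact add_mem (LeftBrace.lam_mem_sup hI hJ a hz)
        (LeftBrace.lam_mem_sup hI hJ a (LeftBrace.star_mem_sup_left hI hJ hz (B.inv a)))
  · obtain ⟨m, hm⟩ := hIn
    obtain ⟨k, hk⟩ := hJn
    refine ⟨m + k + 1, le_bot_iff.mp ?_⟩
    refine le_trans (LeftBrace.chain_le_mix hI hJ (m + k + 1)) ?_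
    refine Finset.sup_le fun i hi => ?_
    rw [Finset.mem_range] at hi
    by_cases h : m + 1 ≤ i
    · have hbot : B.pchain I i = ⊥ := by
        obtain ⟨j, rfl⟩ : ∃ j, i = j + 1 := ⟨i - 1, by omega⟩
        show B.ichainL I j = ⊥
        exact LeftBrace.ichainL_bot_mono hm (by omega)
      exact le_trans inf_le_left (le_of_eq hbot)
    · have hbot : B.pchain J (m + k + 2 - i) = ⊥ := by
        have h2 : m + k + 2 - i = (m + k + 1 - i) + 1 := by omega
        rw [h2]
        show B.ichainL J (m + k + 1 - i) = ⊥
        exact LeftBrace.ichainL_bot_mono hk (by omega)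
      exact le_trans inf_le_right (le_of_eq hbot)
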